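/- arXiv:1605.04559 — 3 statements merged into one kernel-verified Lean document; each statement's English description precedes it below -/
import Mathlib

section
/- Let m ≥ 1 be an integer, let X be a binomial random variable with parameters m and 1/2, and let ℓ ≥ 0 be an integer. Then Pr(|2X − m| ≤ ℓ) ≤ (ℓ+1)·(e/π)/√m. -/
open Real Nat Finset

private lemma stirling_le (n : ℕ) (hn : 1 ≤ n) :
    Stirling.stirlingSeq n ≤ Real.exp 1 / Real.sqrt 2 := by
  obtain ⟨k, rfl⟩ : ∃ k, n = k + 1 := ⟨n - 1, by omega⟩
  calc Stirling.stirlingSeq (k + 1) ≤ Stirling.stirlingSeq (0 + 1) :=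
        Stirling.stirlingSeq'_antitone (Nat.zero_le k)
    _ = Real.exp 1 / Real.sqrt 2 := by simp [Stirling.stirlingSeq_one]

private lemma stirling_ge (n : ℕ) (hn : 1 ≤ n) :
    Real.sqrt Real.pi ≤ Stirling.stirlingSeq n := by
  obtain ⟨k, rfl⟩ : ∃ k, n = k + 1 := ⟨n - 1, by omega⟩
  exact Stirling.stirlingSeq'_antitone.le_of_tendsto
    (Stirling.tendsto_stirlingSeq_sqrt_pi.comp (Filter.tendsto_add_atTop_nat 1)) k

private lemma fac_le (n : ℕ) (hn : 1 ≤ n) :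
    (n ! : ℝ) ≤ Real.exp 1 * Real.sqrt n * ((n : ℝ) / Real.exp 1) ^ n := by
  have hd : (0 : ℝ) < Real.sqrt (2 * n) * ((n : ℝ) / Real.exp 1) ^ n := by
    have : (0:ℝ) < (n:ℝ) := by exact_mod_cast hn
    positivity
  have h := stirling_le n hn
  have hs : (n ! : ℝ) = Stirling.stirlingSeq n * (Real.sqrt (2 * n) * ((n : ℝ) / Real.exp 1) ^ n) := by
    rw [Stirling.stirlingSeq, div_mul_cancel₀ _ (ne_of_gt hd)]
  rw [hs]
  have h2 : Real.sqrt (2 * (n:ℝ)) = Real.sqrt 2 * Real.sqrt n := by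
    rw [Real.sqrt_mul (by norm_num)]
  calc Stirling.stirlingSeq n * (Real.sqrt (2 * n) * ((n : ℝ) / Real.exp 1) ^ n)
      ≤ (Real.exp 1 / Real.sqrt 2) * (Real.sqrt (2 * n) * ((n : ℝ) / Real.exp 1) ^ n) := by
        apply mul_le_mul_of_nonneg_right h (le_of_lt hd)
    _ = Real.exp 1 * Real.sqrt n * ((n : ℝ) / Real.exp 1) ^ n := by
        rw [h2]
        have hs2 : Real.sqrt 2 ≠ 0 := by positivity
        field_simp

private lemma fac_ge (n : ℕ) (hn : 1 ≤ n) :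
    Real.sqrt Real.pi * Real.sqrt (2 * n) * ((n : ℝ) / Real.exp 1) ^ n ≤ (n ! : ℝ) := by
  have hd : (0 : ℝ) < Real.sqrt (2 * n) * ((n : ℝ) / Real.exp 1) ^ n := by
    have : (0:ℝ) < (n:ℝ) := by exact_mod_cast hn
    positivity
  have h := stirling_ge n hn
  have hs : (n ! : ℝ) = Stirling.stirlingSeq n * (Real.sqrt (2 * n) * ((n : ℝ) / Real.exp 1) ^ n) := by
    rw [Stirling.stirlingSeq, div_mul_cancel₀ _ (ne_of_gt hd)]
  rw [hs, mul_assoc]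
  exact mul_le_mul_of_nonneg_right h (le_of_lt hd)

private lemma central_even (n : ℕ) (hn : 1 ≤ n) :
    ((2 * n).choose n : ℝ) / 2 ^ (2 * n)
      ≤ Real.exp 1 / Real.pi / Real.sqrt (2 * n) := by
  have hnR : (0:ℝ) < (n:ℝ) := by exact_mod_cast hn
  set E := Real.exp 1 with hE
  have hEpos : (0:ℝ) < E := Real.exp_pos 1
  set A : ℝ := (n : ℝ) / E with hA
  have hApos : 0 < A := by positivity
  set t : ℝ := Real.sqrt (2 * n) with ht
  have htpos : 0 < t := Real.sqrt_pos.mpr (by positivity)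
  have ht2 : t * t = 2 * (n:ℝ) := Real.mul_self_sqrt (by positivity)
  -- choose identity
  have hCid : ((2 * n).choose n : ℝ) * (n ! : ℝ) * (n ! : ℝ) = ((2 * n)! : ℝ) := by
    have := Nat.choose_mul_factorial_mul_factorial (show n ≤ 2 * n by omega)
    rw [show 2 * n - n = n by omega] at this
    exact_mod_cast congrArg (Nat.cast : ℕ → ℝ) this
  -- upper bound on (2n)!
  have hfu : ((2 * n)! : ℝ) ≤ E * t * (2 ^ (2 * n) * (A ^ n) ^ 2) := by
    have h := fac_le (2 * n) (by omega)
    have hcast : ((2 * n : ℕ) : ℝ) = 2 * (n : ℝ) := by push_cast; ring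
    calc ((2 * n)! : ℝ) ≤ E * Real.sqrt ((2 * n : ℕ) : ℝ) * (((2 * n : ℕ) : ℝ) / E) ^ (2 * n) := h
      _ = E * t * (2 ^ (2 * n) * (A ^ n) ^ 2) := by
          rw [hcast]
          have : (2 * (n:ℝ) / E) ^ (2 * n) = 2 ^ (2 * n) * (A ^ n) ^ 2 := by
            rw [hA, ← pow_mul]
            rw [show 2 * (n:ℝ) / E = 2 * ((n:ℝ) / E) by ring, mul_pow]
            ring
          rw [this, ht]
  -- lower bound on (n!)^2
  have hfl : Real.pi * (2 * (n:ℝ)) * (A ^ n) ^ 2 ≤ (n ! : ℝ) * (n ! : ℝ) := by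
    have h := fac_ge n hn
    have hpi : Real.sqrt Real.pi * Real.sqrt Real.pi = Real.pi :=
      Real.mul_self_sqrt Real.pi_pos.le
    have hnn : (0:ℝ) ≤ Real.sqrt Real.pi * Real.sqrt (2 * n) * ((n : ℝ) / E) ^ n := by positivity
    have := mul_le_mul h h hnn (Nat.cast_nonneg _)
    calc Real.pi * (2 * (n:ℝ)) * (A ^ n) ^ 2
        = (Real.sqrt Real.pi * Real.sqrt (2 * (n:ℝ)) * ((n : ℝ) / E) ^ n) *
          (Real.sqrt Real.pi * Real.sqrt (2 * (n:ℝ)) * ((n : ℝ) / E) ^ n) := by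
          rw [hA]
          have h2 : Real.sqrt (2 * (n:ℝ)) * Real.sqrt (2 * (n:ℝ)) = 2 * (n:ℝ) :=
            Real.mul_self_sqrt (by positivity)
          calc Real.pi * (2 * (n:ℝ)) * (((n:ℝ) / E) ^ n) ^ 2
              = (Real.sqrt Real.pi * Real.sqrt Real.pi) *
                (Real.sqrt (2 * (n:ℝ)) * Real.sqrt (2 * (n:ℝ))) * (((n:ℝ) / E) ^ n) ^ 2 := by
                rw [hpi, h2]
            _ = (Real.sqrt Real.pi * Real.sqrt (2 * (n:ℝ)) * ((n : ℝ) / E) ^ n) *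
                (Real.sqrt Real.pi * Real.sqrt (2 * (n:ℝ)) * ((n : ℝ) / E) ^ n) := by ring
      _ ≤ (n ! : ℝ) * (n ! : ℝ) := this
  -- combine
  have hC : (0:ℝ) ≤ ((2 * n).choose n : ℝ) := Nat.cast_nonneg _
  have key : ((2 * n).choose n : ℝ) * (Real.pi * (2 * (n:ℝ)) * (A ^ n) ^ 2)
      ≤ E * t * (2 ^ (2 * n) * (A ^ n) ^ 2) := by
    calc ((2 * n).choose n : ℝ) * (Real.pi * (2 * (n:ℝ)) * (A ^ n) ^ 2)
        ≤ ((2 * n).choose n : ℝ) * ((n ! : ℝ) * (n ! : ℝ)) :=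
          mul_le_mul_of_nonneg_left hfl hC
      _ = ((2 * n)! : ℝ) := by rw [← hCid]; ring
      _ ≤ E * t * (2 ^ (2 * n) * (A ^ n) ^ 2) := hfu
  -- cancel (A^n)^2
  have hAn : (0:ℝ) < (A ^ n) ^ 2 := by positivity
  have key2 : ((2 * n).choose n : ℝ) * (Real.pi * (2 * (n:ℝ)))
      ≤ E * t * 2 ^ (2 * n) := by
    have := (mul_le_mul_iff_of_pos_right hAn).mp (by nlinarith [key] : (((2 * n).choose n : ℝ) * (Real.pi * (2 * (n:ℝ)))) * (A ^ n) ^ 2 ≤ (E * t * 2 ^ (2 * n)) * (A ^ n) ^ 2)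
    exact this
  -- conclude
  have hp2 : (0:ℝ) < (2:ℝ) ^ (2 * n) := by positivity
  rw [div_le_div_iff₀ hp2 (by positivity : (0:ℝ) < t),
    div_mul_eq_mul_div, le_div_iff₀ Real.pi_pos]
  have k3 := mul_le_mul_of_nonneg_right key2 htpos.le
  have k4 : (((2 * n).choose n : ℝ) * t * Real.pi) * (2 * (n:ℝ))
      ≤ (E * 2 ^ (2 * n)) * (2 * (n:ℝ)) := by
    calc (((2 * n).choose n : ℝ) * t * Real.pi) * (2 * (n:ℝ))
        = ((2 * n).choose n : ℝ) * (Real.pi * (2 * (n:ℝ))) * t := by ring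
      _ ≤ E * t * 2 ^ (2 * n) * t := k3
      _ = (E * 2 ^ (2 * n)) * (2 * (n:ℝ)) := by rw [← ht2]; ring
  exact le_of_mul_le_mul_right k4 (by positivity)

private lemma central_bound (m : ℕ) (hm : 1 ≤ m) :
    (m.choose (m / 2) : ℝ) / 2 ^ m ≤ Real.exp 1 / Real.pi / Real.sqrt m := by
  rcases Nat.even_or_odd m with ⟨n, hn⟩ | ⟨n, hn⟩
  · have hn2 : m = 2 * n := by omega
    subst hn2
    rw [show 2 * n / 2 = n by omega]
    exact_mod_cast central_even n (by omega)
  · have hn2 : m = 2 * n + 1 := by omega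
    subst hn2
    rw [show (2 * n + 1) / 2 = n by omega]
    have hid : (2 * (n + 1)).choose (n + 1) = 2 * ((2 * n + 1).choose n) := by
      have h1 : (2 * n + 1 + 1).choose (n + 1)
          = (2 * n + 1).choose n + (2 * n + 1).choose (n + 1) :=
        Nat.choose_succ_succ (2 * n + 1) n
      have h2 := Nat.choose_symm_half n
      rw [show 2 * (n + 1) = 2 * n + 1 + 1 by ring]
      omega
    have heven := central_even (n + 1) (by omega)
    have hhalf : ((2 * n + 1).choose n : ℝ) / 2 ^ (2 * n + 1)
        = ((2 * (n + 1)).choose (n + 1) : ℝ) / 2 ^ (2 * (n + 1)) := by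
      rw [hid]
      push_cast
      rw [show 2 * (n + 1) = (2 * n + 1) + 1 by ring, pow_succ]
      field_simp
      ring
    rw [hhalf]
    refine le_trans heven ?_
    gcongr
    push_cast
    linarith

/-- Anti-concentration for `X ~ B(m, 1/2)`: the probability that the difference
`2X - m` between ones and zeros among `m` uniform bits has absolute value at most
`ℓ` is bounded by `(ℓ + 1) * (e/π) / √m`. -/
theorem binomial_anticoncentration (m ℓ : ℕ) (hm : 1 ≤ m) :
    ∑ j ∈ (Finset.range (m + 1)).filter
        (fun j : ℕ => |2 * (j : ℤ) - (m : ℤ)| ≤ (ℓ : ℤ)),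
      (m.choose j : ℝ) / 2 ^ m
    ≤ ((ℓ : ℝ) + 1) * (Real.exp 1 / Real.pi) / Real.sqrt m := by
  set S := (Finset.range (m + 1)).filter
      (fun j : ℕ => |2 * (j : ℤ) - (m : ℤ)| ≤ (ℓ : ℤ)) with hS
  have hB : ∀ j ∈ S, (m.choose j : ℝ) / 2 ^ m ≤ Real.exp 1 / Real.pi / Real.sqrt m := by
    intro j _
    refine le_trans ?_ (central_bound m hm)
    gcongr
    exact_mod_cast Nat.choose_le_middle j m
  have hcard : S.card ≤ ℓ + 1 := by
    have hsub : S ⊆ Finset.Icc ((m + 1 - ℓ) / 2) ((m + ℓ) / 2) := by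
      intro j hj
      rw [hS, Finset.mem_filter, Finset.mem_range, abs_le] at hj
      rw [Finset.mem_Icc]
      omega
    have h := Finset.card_le_card hsub
    rw [Nat.card_Icc] at h
    omega
  calc ∑ j ∈ S, (m.choose j : ℝ) / 2 ^ m
      ≤ S.card • (Real.exp 1 / Real.pi / Real.sqrt m) := Finset.sum_le_card_nsmul S _ _ hB
    _ = (S.card : ℝ) * (Real.exp 1 / Real.pi / Real.sqrt m) := nsmul_eq_mul _ _
    _ ≤ ((ℓ : ℝ) + 1) * (Real.exp 1 / Real.pi / Real.sqrt m) := by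
        gcongr
        exact_mod_cast hcard
    _ = ((ℓ : ℝ) + 1) * (Real.exp 1 / Real.pi) / Real.sqrt m := by
        rw [mul_div_assoc]
end

section
/- Let m ≥ 1 and ℓ ≥ 0 be integers, let X = (X₁,…,X_m) be m i.i.d. uniform random bits, and let f : {0,1}^m → {0,1}^ℓ be an arbitrary function. Form the n = m + ℓ bits consisting of X together with the ℓ bits f(X), and let maj = 1 if strictly more than n/2 of these n bits equal 1, and maj = 0 otherwise. Then |Pr(maj = 1) − 1/2| ≤ (1/2)·Pr(|D| ≤ ℓ), where D = (number of ones among X) − (number of zeros among X). -/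
lemma card_not_ones (m : ℕ) (x : Fin m → Bool) :
    (Finset.univ.filter fun i : Fin m => (!x i) = true).card
      + (Finset.univ.filter fun i : Fin m => x i = true).card = m := by
  have h := Finset.card_filter_add_card_filter_not
    (s := (Finset.univ : Finset (Fin m))) (p := fun i => x i = true)
  have h2 : (Finset.univ.filter fun i : Fin m => (!x i) = true)
      = Finset.univ.filter fun i : Fin m => ¬ (x i = true) := by
    apply Finset.filter_congr; intro i _; simp
  rw [h2]
  simp only [Finset.card_univ, Fintype.card_fin] at h
  omega


/-- Majority with `ℓ` adversarially chosen bits: for `m` i.i.d. uniform bits `x`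
and an arbitrary function `f` producing `ℓ` further bits, the majority of the
`n = m + ℓ` bits has bias at most `(1/2) ⬝ Pr(|D| ≤ ℓ)`, where
`D = #ones(x) - #zeros(x) = 2 #ones(x) - m`. -/
theorem majority_bias_le_half_anticoncentration (m ℓ : ℕ) (hm : 1 ≤ m)
    (f : (Fin m → Bool) → (Fin ℓ → Bool)) :
    |((Finset.univ.filter fun x : Fin m → Bool =>
          m + ℓ < 2 * ((Finset.univ.filter fun i : Fin m => x i = true).card
            + (Finset.univ.filter fun j : Fin ℓ => f x j = true).card)).card : ℝ)
        / 2 ^ m - 1 / 2|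
      ≤ 1 / 2 * (((Finset.univ.filter fun x : Fin m → Bool =>
          |2 * (((Finset.univ.filter fun i : Fin m => x i = true).card : ℤ))
            - (m : ℤ)| ≤ (ℓ : ℤ)).card : ℝ) / 2 ^ m) := by
  classical
  set A := (Finset.univ.filter fun x : Fin m → Bool =>
      m + ℓ < 2 * ((Finset.univ.filter fun i : Fin m => x i = true).card
        + (Finset.univ.filter fun j : Fin ℓ => f x j = true).card)) with hAdef
  set B := (Finset.univ.filter fun x : Fin m → Bool =>
      |2 * (((Finset.univ.filter fun i : Fin m => x i = true).card : ℤ))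
        - (m : ℤ)| ≤ (ℓ : ℤ)) with hBdef
  set P := (Finset.univ.filter fun x : Fin m → Bool =>
      (ℓ : ℤ) < 2 * (((Finset.univ.filter fun i : Fin m => x i = true).card : ℤ))
        - (m : ℤ)) with hPdef
  set N := (Finset.univ.filter fun x : Fin m → Bool =>
      2 * (((Finset.univ.filter fun i : Fin m => x i = true).card : ℤ))
        - (m : ℤ) < -(ℓ : ℤ)) with hNdef
  have gle : ∀ x : Fin m → Bool,
      (Finset.univ.filter fun j : Fin ℓ => f x j = true).card ≤ ℓ := by
    intro x
    exact le_trans (Finset.card_filter_le _ _) (by simp)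
  -- P ⊆ A
  have hPA : P ⊆ A := by
    intro x hx
    rw [hPdef, Finset.mem_filter] at hx
    rw [hAdef, Finset.mem_filter]
    refine ⟨Finset.mem_univ _, ?_⟩
    have h1 : (m : ℤ) + ℓ
        < 2 * ((Finset.univ.filter fun i : Fin m => x i = true).card : ℤ) := by
      linarith [hx.2]
    have h2 : m + ℓ < 2 * (Finset.univ.filter fun i : Fin m => x i = true).card := by
      exact_mod_cast h1
    omega
  -- A ⊆ P ∪ B
  have hAPB : A ⊆ P ∪ B := by
    intro x hx
    rw [hAdef, Finset.mem_filter] at hx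
    rw [Finset.mem_union, hPdef, hBdef, Finset.mem_filter, Finset.mem_filter]
    by_cases hp : (ℓ : ℤ) < 2 * (((Finset.univ.filter fun i : Fin m => x i = true).card : ℤ))
        - (m : ℤ)
    · exact Or.inl ⟨Finset.mem_univ _, hp⟩
    · refine Or.inr ⟨Finset.mem_univ _, ?_⟩
      rw [abs_le]
      push_neg at hp
      refine ⟨?_, hp⟩
      have hg := gle x
      have := hx.2
      have h1 : m + ℓ < 2 * ((Finset.univ.filter fun i : Fin m => x i = true).card) + 2 * ℓ := by
        omega
      have h2 : (m : ℤ) + ℓ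
          < 2 * ((Finset.univ.filter fun i : Fin m => x i = true).card : ℤ) + 2 * ℓ := by
        exact_mod_cast h1
      linarith
  -- card P = card N via bit flip
  have hPN : P.card = N.card := by
    apply Finset.card_bij' (fun x _ => fun i => !x i) (fun x _ => fun i => !x i)
    · intro x hx
      rw [hPdef, Finset.mem_filter] at hx
      rw [hNdef, Finset.mem_filter]
      refine ⟨Finset.mem_univ _, ?_⟩
      have := card_not_ones m x
      have hc : ((Finset.univ.filter fun i : Fin m => (!x i) = true).card : ℤ)
          = (m : ℤ) - ((Finset.univ.filter fun i : Fin m => x i = true).card : ℤ) := by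
        omega
      rw [hc]
      linarith [hx.2]
    · intro x hx
      rw [hNdef, Finset.mem_filter] at hx
      rw [hPdef, Finset.mem_filter]
      refine ⟨Finset.mem_univ _, ?_⟩
      have := card_not_ones m x
      have hc : ((Finset.univ.filter fun i : Fin m => (!x i) = true).card : ℤ)
          = (m : ℤ) - ((Finset.univ.filter fun i : Fin m => x i = true).card : ℤ) := by
        omega
      rw [hc]
      linarith [hx.2]
    · intro x _; funext i; simp
    · intro x _; funext i; simp
  -- partition
  have hunion : P ∪ N ∪ B = Finset.univ := by
    ext x
    simp only [Finset.mem_union, hPdef, hNdef, hBdef, Finset.mem_filter, Finset.mem_univ,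
      true_and, iff_true, abs_le]
    omega
  have hdPN : Disjoint P N := by
    rw [Finset.disjoint_left]
    intro x hx hx'
    rw [hPdef, Finset.mem_filter] at hx
    rw [hNdef, Finset.mem_filter] at hx'
    omega
  have hdPNB : Disjoint (P ∪ N) B := by
    rw [Finset.disjoint_left]
    intro x hx hx'
    rw [Finset.mem_union, hPdef, hNdef, Finset.mem_filter, Finset.mem_filter] at hx
    rw [hBdef, Finset.mem_filter, abs_le] at hx'
    rcases hx with ⟨_, h⟩ | ⟨_, h⟩ <;> omega
  have hcardU : (Finset.univ : Finset (Fin m → Bool)).card = 2 ^ m := by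
    simp [Finset.card_univ]
  have hsum : P.card + N.card + B.card = 2 ^ m := by
    rw [← hcardU, ← hunion, Finset.card_union_of_disjoint hdPNB,
      Finset.card_union_of_disjoint hdPN]
  -- card bounds on A
  have hA1 : P.card ≤ A.card := Finset.card_le_card hPA
  have hA2 : A.card ≤ P.card + B.card :=
    le_trans (Finset.card_le_card hAPB) (Finset.card_union_le _ _)
  -- real arithmetic
  have h2m : (0 : ℝ) < 2 ^ m := by positivity
  have hlow : (2 : ℝ) ^ m ≤ 2 * A.card + B.card := by
    have : 2 ^ m ≤ 2 * A.card + B.card := by omega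
    exact_mod_cast this
  have hhigh : 2 * (A.card : ℝ) ≤ 2 ^ m + B.card := by
    have : 2 * A.card ≤ 2 ^ m + B.card := by omega
    exact_mod_cast this
  have heq : (A.card : ℝ) / 2 ^ m - 1 / 2 = (2 * A.card - 2 ^ m) / (2 * 2 ^ m) := by
    field_simp
  have heq2 : 1 / 2 * ((B.card : ℝ) / 2 ^ m) = (B.card : ℝ) / (2 * 2 ^ m) := by
    ring
  rw [heq, abs_div, heq2, abs_of_pos (show (0:ℝ) < 2 * 2 ^ m from by positivity)]
  gcongr
  rw [abs_le]
  constructor <;> linarith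
end

section
/- Let ε be a real number with 0 < ε ≤ e/π, let n ≥ 2 be an integer, set ℓ = ⌊ε·(π/e)·√(n − √n)⌋ and m = n − ℓ. Let X = (X₁,…,X_m) be m i.i.d. uniform random bits and let f : {0,1}^m → {0,1}^ℓ be an arbitrary function. Form the n bits consisting of X together with f(X), and let maj = 1 if strictly more than n/2 of the n bits equal 1, and maj = 0 otherwise. Then |Pr(maj = 1) − 1/2| ≤ ε + (e/π)/√(n − ℓ). -/
open Finset

lemma centralBinom_sq_le (k : ℕ) : Nat.centralBinom k ^ 2 * (3 * k + 1) ≤ 16 ^ k := by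
  induction k with
  | zero => simp [Nat.centralBinom]
  | succ k ih =>
    have h := Nat.succ_mul_centralBinom_succ k
    have hpos : 0 < (k + 1) ^ 2 * (3 * k + 1) := by positivity
    have key : Nat.centralBinom (k+1) ^ 2 * (3 * (k+1) + 1) * ((k + 1) ^ 2 * (3 * k + 1))
        ≤ 16 ^ (k+1) * ((k + 1) ^ 2 * (3 * k + 1)) := by
      calc Nat.centralBinom (k+1) ^ 2 * (3 * (k+1) + 1) * ((k + 1) ^ 2 * (3 * k + 1))
          = ((k+1) * Nat.centralBinom (k+1))^2 * ((3*k+4)*(3*k+1)) := by ring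
        _ = (2*(2*k+1)* Nat.centralBinom k)^2 * ((3*k+4)*(3*k+1)) := by rw [h]
        _ = (4*(2*k+1)^2*(3*k+4)) * (Nat.centralBinom k ^2*(3*k+1)) := by ring
        _ ≤ (16*(k+1)^2*(3*k+1)) * 16^k := Nat.mul_le_mul (by nlinarith) ih
        _ = 16^(k+1) * ((k + 1) ^ 2 * (3 * k + 1)) := by ring
    exact Nat.le_of_mul_le_mul_right key hpos

lemma cb_sqrt_le (k : ℕ) : (Nat.centralBinom k : ℝ) * Real.sqrt (3 * k + 1) ≤ 4 ^ k := by
  have h := centralBinom_sq_le k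
  have h2 : ((Nat.centralBinom k : ℝ) * Real.sqrt (3 * k + 1)) ^ 2 ≤ ((4 : ℝ) ^ k) ^ 2 := by
    rw [mul_pow, Real.sq_sqrt (by positivity)]
    have : ((4 : ℝ) ^ k) ^ 2 = ((16 ^ k : ℕ) : ℝ) := by
      push_cast; rw [← pow_mul, pow_mul']; norm_num
    rw [this]
    calc ((Nat.centralBinom k : ℝ)) ^ 2 * (3 * (k : ℝ) + 1)
        = (((Nat.centralBinom k ^ 2 * (3 * k + 1) : ℕ)) : ℝ) := by push_cast; ring
      _ ≤ ((16 ^ k : ℕ) : ℝ) := by exact_mod_cast h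
  have hnn : (0:ℝ) ≤ (Nat.centralBinom k : ℝ) * Real.sqrt (3 * k + 1) := by positivity
  nlinarith [hnn, pow_nonneg (by norm_num : (0:ℝ) ≤ 4) k]

lemma e_pi_lb : (0.86 : ℝ) ≤ Real.exp 1 / Real.pi := by
  rw [le_div_iff₀ Real.pi_pos]
  nlinarith [Real.pi_lt_d2, Real.exp_one_gt_d9, Real.pi_pos]

lemma choose_middle_sqrt_le (m : ℕ) :
    (m.choose (m / 2) : ℝ) * Real.sqrt m ≤ (Real.exp 1 / Real.pi) * 2 ^ m := by
  have hc := e_pi_lb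
  have hc2 : (0.86 : ℝ)^2 ≤ (Real.exp 1 / Real.pi)^2 := by
    apply pow_le_pow_left₀ (by norm_num) hc
  have hc0 : (0:ℝ) ≤ Real.exp 1 / Real.pi := by linarith
  rcases Nat.even_or_odd m with ⟨k, hk⟩ | ⟨k, hk⟩
  · -- m = 2k
    subst hk
    have hdiv : (k + k) / 2 = k := by omega
    have hch : (k + k).choose ((k + k) / 2) = Nat.centralBinom k := by
      rw [hdiv, Nat.centralBinom]; congr 1; omega
    rw [hch]
    have h1 : Real.sqrt (k + k : ℕ) ≤ (Real.exp 1 / Real.pi) * Real.sqrt (3 * k + 1) := by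
      have : ((k + k : ℕ) : ℝ) ≤ (Real.exp 1 / Real.pi) ^ 2 * (3 * k + 1) := by
        push_cast; nlinarith [hc2, (Nat.cast_nonneg k : (0:ℝ) ≤ k)]
      calc Real.sqrt (k + k : ℕ) ≤ Real.sqrt ((Real.exp 1 / Real.pi) ^ 2 * (3 * k + 1)) :=
            Real.sqrt_le_sqrt this
        _ = (Real.exp 1 / Real.pi) * Real.sqrt (3 * k + 1) := by
            rw [Real.sqrt_mul (by positivity), Real.sqrt_sq hc0]
    calc (Nat.centralBinom k : ℝ) * Real.sqrt (k + k : ℕ)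
        ≤ (Nat.centralBinom k : ℝ) * ((Real.exp 1 / Real.pi) * Real.sqrt (3 * k + 1)) := by
          exact mul_le_mul_of_nonneg_left h1 (by positivity)
      _ = (Real.exp 1 / Real.pi) * ((Nat.centralBinom k : ℝ) * Real.sqrt (3 * k + 1)) := by ring
      _ ≤ (Real.exp 1 / Real.pi) * 4 ^ k := mul_le_mul_of_nonneg_left (cb_sqrt_le k) hc0
      _ = (Real.exp 1 / Real.pi) * 2 ^ (k + k) := by
          rw [show k + k = 2 * k by ring, pow_mul]; norm_num
  · -- m = 2k+1
    subst hk
    have hdiv : (2 * k + 1) / 2 = k := by omega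
    have hch : 2 * (2 * k + 1).choose k = Nat.centralBinom (k + 1) := by
      rw [Nat.centralBinom]
      have h2 : 2 * (k + 1) = (2 * k + 1) + 1 := by ring
      rw [h2, Nat.choose_succ_succ', Nat.choose_symm_half]
      ring
    rw [hdiv]
    have h1 : Real.sqrt (2 * k + 1 : ℕ) ≤ (Real.exp 1 / Real.pi) * Real.sqrt (3 * (k+1) + 1) := by
      have : ((2 * k + 1 : ℕ) : ℝ) ≤ (Real.exp 1 / Real.pi) ^ 2 * (3 * (k+1) + 1) := by
        push_cast; nlinarith [hc2, (Nat.cast_nonneg k : (0:ℝ) ≤ k)]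
      calc Real.sqrt (2 * k + 1 : ℕ)
          ≤ Real.sqrt ((Real.exp 1 / Real.pi) ^ 2 * (3 * (k+1) + 1)) := Real.sqrt_le_sqrt this
        _ = (Real.exp 1 / Real.pi) * Real.sqrt (3 * (k+1) + 1) := by
            rw [Real.sqrt_mul (by positivity), Real.sqrt_sq hc0]
    have key : 2 * (((2 * k + 1).choose k : ℝ) * Real.sqrt (2 * k + 1 : ℕ))
        ≤ 2 * ((Real.exp 1 / Real.pi) * 2 ^ (2 * k + 1)) := by
      calc 2 * (((2 * k + 1).choose k : ℝ) * Real.sqrt (2 * k + 1 : ℕ))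
          = ((2 * (2 * k + 1).choose k : ℕ) : ℝ) * Real.sqrt (2 * k + 1 : ℕ) := by push_cast; ring
        _ = (Nat.centralBinom (k+1) : ℝ) * Real.sqrt (2 * k + 1 : ℕ) := by rw [hch]
        _ ≤ (Nat.centralBinom (k+1) : ℝ) * ((Real.exp 1 / Real.pi) * Real.sqrt (3 * (k+1) + 1)) :=
            mul_le_mul_of_nonneg_left h1 (by positivity)
        _ = (Real.exp 1 / Real.pi) * ((Nat.centralBinom (k+1) : ℝ) * Real.sqrt (3 * (k+1) + 1)) := by
            push_cast; ring
        _ ≤ (Real.exp 1 / Real.pi) * 4 ^ (k+1) := by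
            have hcb := cb_sqrt_le (k+1); push_cast at hcb ⊢
            exact mul_le_mul_of_nonneg_left hcb hc0
        _ = 2 * ((Real.exp 1 / Real.pi) * 2 ^ (2 * k + 1)) := by
            rw [show (4:ℝ) = 2^2 by norm_num, ← pow_mul]; ring
    linarith
open Finset

namespace MajExt

variable {m : ℕ}

/-- weight of a bit vector -/
def wt (x : Fin m → Bool) : ℕ := (univ.filter fun i => x i = true).card

lemma wt_le (x : Fin m → Bool) : wt x ≤ m := by
  classical
  calc wt x ≤ (univ : Finset (Fin m)).card := Finset.card_filter_le _ _
    _ = m := by simp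

lemma wt_not (x : Fin m → Bool) : wt (fun i => !x i) + wt x = m := by
  classical
  have h := Finset.card_filter_add_card_filter_not
    (s := (univ : Finset (Fin m))) (p := fun i => x i = true)
  have heq : (univ.filter fun i => (!x i) = true) = (univ.filter fun i => ¬ (x i = true)) := by
    apply Finset.filter_congr; intro i _; simp
  unfold wt
  rw [heq, add_comm]
  simpa using h

lemma card_wt_neg (p q : ℕ → Prop) [DecidablePred p] [DecidablePred q]
    (h : ∀ j ≤ m, (p j ↔ q (m - j))) :
    (univ.filter fun x : Fin m → Bool => p (wt x)).card
      = (univ.filter fun x : Fin m → Bool => q (wt x)).card := by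
  classical
  apply Finset.card_bij' (fun x _ => fun i => !x i) (fun x _ => fun i => !x i)
  · intro x hx
    simp only [mem_filter, mem_univ, true_and] at hx ⊢
    have h1 := wt_not x
    have h2 := wt_le x
    have := (h (wt x) h2).1 hx
    have harg : wt (fun i => !x i) = m - wt x := by omega
    rwa [harg]
  · intro x hx
    simp only [mem_filter, mem_univ, true_and] at hx ⊢
    have h1 := wt_not x
    have h2 := wt_le x
    have harg : wt (fun i => !x i) = m - wt x := by omega
    rw [harg]
    exact (h (m - wt x) (by omega)).2 (by rwa [show m - (m - wt x) = wt x by omega])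
  · intro x _; funext i; simp
  · intro x _; funext i; simp

lemma card_wt_eq_le (k : ℕ) :
    (univ.filter fun x : Fin m → Bool => wt x = k).card ≤ m.choose k := by
  classical
  have hrhs : m.choose k = ((univ : Finset (Fin m)).powersetCard k).card := by
    rw [Finset.card_powersetCard, card_univ, Fintype.card_fin]
  rw [hrhs]
  apply Finset.card_le_card_of_injOn (fun x => univ.filter fun i => x i = true)
  · intro x hx
    simp only [Finset.mem_coe, mem_filter, mem_univ, true_and] at hx
    rw [Finset.mem_coe, Finset.mem_powersetCard]
    exact ⟨Finset.filter_subset _ _, hx⟩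
  · intro x _ y _ hxy
    funext i
    have : (i ∈ univ.filter fun j => x j = true) = (i ∈ univ.filter fun j => y j = true) :=
      congrArg (fun s => i ∈ s) hxy
    simp only [mem_filter, mem_univ, true_and] at this
    cases hx : x i <;> cases hy : y i <;> simp_all

lemma card_wt_mem_le (p : ℕ → Prop) [DecidablePred p] (K : Finset ℕ)
    (h : ∀ j ≤ m, p j → j ∈ K) :
    (univ.filter fun x : Fin m → Bool => p (wt x)).card ≤ K.card * m.choose (m / 2) := by
  classical
  set s := (univ.filter fun x : Fin m → Bool => p (wt x)) with hs
  have hf : ∀ x ∈ s, wt x ∈ K := by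
    intro x hx
    rw [hs, mem_filter] at hx
    exact h _ (wt_le x) hx.2
  rw [Finset.card_eq_sum_card_fiberwise hf]
  have hbound : ∀ k ∈ K, (s.filter fun x => wt x = k).card ≤ m.choose (m / 2) := by
    intro k _
    calc (s.filter fun x => wt x = k).card
        ≤ (univ.filter fun x : Fin m → Bool => wt x = k).card := by
          apply Finset.card_le_card
          intro x hx
          rw [mem_filter] at hx ⊢
          exact ⟨mem_univ _, hx.2⟩
      _ ≤ m.choose k := card_wt_eq_le k
      _ ≤ m.choose (m / 2) := Nat.choose_le_middle k m
  calc ∑ k ∈ K, (s.filter fun x => wt x = k).card ≤ K.card • (m.choose (m / 2)) :=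
        Finset.sum_le_card_nsmul K _ _ hbound
    _ = K.card * m.choose (m / 2) := by simp

end MajExt

section Main
open MajExt

/-- Majority extractor guarantee: for `0 < ε ≤ e/π`, `n ≥ 2`,
`ℓ = ⌊ε (π/e) √(n - √n)⌋` and `m = n - ℓ`, if an adversary chooses `ℓ` of the
`n` bits as an arbitrary function `f` of the other `m` uniform bits, then the
majority bit has statistical bias at most `ε + (e/π)/√(n - ℓ)`. -/
theorem majority_extractor (ε : ℝ) (n : ℕ) (hε0 : 0 < ε)
    (hε1 : ε ≤ Real.exp 1 / Real.pi) (hn : 2 ≤ n) (ℓ m : ℕ)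
    (hℓ : ℓ = ⌊ε * (Real.pi / Real.exp 1) * Real.sqrt ((n : ℝ) - Real.sqrt n)⌋₊)
    (hmdef : m = n - ℓ)
    (f : (Fin m → Bool) → (Fin ℓ → Bool)) :
    |((Finset.univ.filter fun x : Fin m → Bool =>
          n < 2 * ((Finset.univ.filter fun i : Fin m => x i = true).card
            + (Finset.univ.filter fun j : Fin ℓ => f x j = true).card)).card : ℝ)
        / 2 ^ m - 1 / 2|
      ≤ ε + (Real.exp 1 / Real.pi) / Real.sqrt ((n : ℝ) - (ℓ : ℝ)) := by
  classical
  have hπ := Real.pi_pos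
  have he : (0:ℝ) < Real.exp 1 := Real.exp_pos 1
  -- real preliminaries about ℓ, m, n
  have hn2 : (2:ℝ) ≤ n := by exact_mod_cast hn
  have hsn : Real.sqrt n ≤ n := by
    have : Real.sqrt n ≤ Real.sqrt ((n:ℝ)^2) := Real.sqrt_le_sqrt (by nlinarith)
    rwa [Real.sqrt_sq (by positivity)] at this
  have h0 : (0:ℝ) ≤ (n:ℝ) - Real.sqrt n := by linarith
  have hfloorle : (ℓ:ℝ) ≤ ε * (Real.pi / Real.exp 1) * Real.sqrt ((n:ℝ) - Real.sqrt n) := by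
    rw [hℓ]; exact Nat.floor_le (by positivity)
  have hfac : ε * (Real.pi / Real.exp 1) ≤ 1 := by
    rw [le_div_iff₀ hπ] at hε1
    rw [← mul_div_assoc, div_le_one he]
    linarith
  have hℓsq : (ℓ:ℝ) ≤ Real.sqrt ((n:ℝ) - Real.sqrt n) := by
    calc (ℓ:ℝ) ≤ ε * (Real.pi / Real.exp 1) * Real.sqrt ((n:ℝ) - Real.sqrt n) := hfloorle
      _ ≤ 1 * Real.sqrt ((n:ℝ) - Real.sqrt n) :=
          mul_le_mul_of_nonneg_right hfac (Real.sqrt_nonneg _)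
      _ = Real.sqrt ((n:ℝ) - Real.sqrt n) := one_mul _
  have hℓsn : (ℓ:ℝ) ≤ Real.sqrt n :=
    hℓsq.trans (Real.sqrt_le_sqrt (by linarith [Real.sqrt_nonneg (n:ℝ)]))
  have hℓltn : ℓ < n := by
    have h2 : Real.sqrt n < n := by
      rw [show Real.sqrt (n:ℝ) < (n:ℝ) ↔ (n:ℝ) < (n:ℝ)^2 from Real.sqrt_lt' (by linarith)]
      nlinarith
    exact_mod_cast hℓsn.trans_lt h2
  have hnm : n = m + ℓ := by omega
  have hm1 : 1 ≤ m := by omega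
  have hmr : (n:ℝ) - (ℓ:ℝ) = (m:ℝ) := by
    have h' : (m:ℕ) + ℓ = n := by omega
    push_cast [← h']; ring
  have hnsm : (n:ℝ) - Real.sqrt n ≤ (m:ℝ) := by linarith [hmr]
  -- combinatorial part
  show |(((univ.filter fun x : Fin m → Bool => n < 2 * (wt x + wt (f x))).card : ℕ) : ℝ)
        / 2 ^ m - 1 / 2| ≤ _
  set S := (univ.filter fun x : Fin m → Bool => n < 2 * (wt x + wt (f x))).card with hSdef
  set A := (univ.filter fun x : Fin m → Bool => n < 2 * wt x).card with hAdef
  set A' := (univ.filter fun x : Fin m → Bool => n ≤ 2 * wt x).card with hA'def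
  set B := (univ.filter fun x : Fin m → Bool => n < 2 * wt x + 2 * ℓ).card with hBdef
  set D := (univ.filter fun x : Fin m → Bool => 2 * wt x ≤ n ∧ m ≤ 2 * wt x + ℓ).card with hDdef
  have hcardU : (univ : Finset (Fin m → Bool)).card = 2^m := by
    simp [card_univ]
  have hAS : A ≤ S := by
    apply Finset.card_le_card
    intro x hx
    simp only [mem_filter, mem_univ, true_and] at hx ⊢
    omega
  have hSB : S ≤ B := by
    apply Finset.card_le_card
    intro x hx
    simp only [mem_filter, mem_univ, true_and] at hx ⊢
    have := wt_le (f x)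
    omega
  have hBA' : B + A' = 2^m := by
    have h1 := Finset.card_filter_add_card_filter_not
      (s := (univ : Finset (Fin m → Bool))) (p := fun x => n < 2 * wt x + 2 * ℓ)
    have h2 : (univ.filter fun x : Fin m → Bool => ¬ (n < 2 * wt x + 2 * ℓ))
        = (univ.filter fun x : Fin m → Bool => 2 * wt x + 2 * ℓ ≤ n) := by
      apply Finset.filter_congr; intro x _; simp [not_lt]
    have h3 : (univ.filter fun x : Fin m → Bool => 2 * wt x + 2 * ℓ ≤ n).card = A' :=
      card_wt_neg (p := fun j => 2*j + 2*ℓ ≤ n) (q := fun j => n ≤ 2*j) (by intro j hj; omega)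
    rw [h2, h3, hcardU] at h1
    exact h1
  have hAA' : A ≤ A' := by
    apply Finset.card_le_card
    intro x hx
    simp only [mem_filter, mem_univ, true_and] at hx ⊢
    omega
  have hA2 : A = (univ.filter fun x : Fin m → Bool => 2 * wt x + ℓ < m).card :=
    card_wt_neg (p := fun j => n < 2*j) (q := fun j => 2*j + ℓ < m) (by intro j hj; omega)
  have hsplit : (univ.filter fun x : Fin m → Bool => 2 * wt x ≤ n).card
      = (univ.filter fun x : Fin m → Bool => 2 * wt x + ℓ < m).card + D := by
    have h1 := Finset.card_filter_add_card_filter_not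
      (s := (univ.filter fun x : Fin m → Bool => 2 * wt x ≤ n))
      (p := fun x => 2 * wt x + ℓ < m)
    rw [Finset.filter_filter, Finset.filter_filter] at h1
    have e1 : (univ.filter fun x : Fin m → Bool => 2*wt x ≤ n ∧ 2*wt x + ℓ < m)
        = (univ.filter fun x : Fin m → Bool => 2*wt x + ℓ < m) := by
      apply Finset.filter_congr; intro x _
      constructor
      · exact fun h => h.2
      · intro h; exact ⟨by omega, h⟩
    have e2 : (univ.filter fun x : Fin m → Bool => 2*wt x ≤ n ∧ ¬(2*wt x + ℓ < m))
        = (univ.filter fun x : Fin m → Bool => 2*wt x ≤ n ∧ m ≤ 2*wt x + ℓ) := by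
      apply Finset.filter_congr; intro x _
      constructor
      · exact fun h => ⟨h.1, by omega⟩
      · exact fun h => ⟨h.1, by omega⟩
    rw [e1, e2] at h1
    omega
  have hcomp : (univ.filter fun x : Fin m → Bool => 2 * wt x ≤ n).card + A = 2^m := by
    have h1 := Finset.card_filter_add_card_filter_not
      (s := (univ : Finset (Fin m → Bool))) (p := fun x => n < 2 * wt x)
    have h2 : (univ.filter fun x : Fin m → Bool => ¬(n < 2*wt x))
        = (univ.filter fun x : Fin m → Bool => 2*wt x ≤ n) := by
      apply Finset.filter_congr; intro x _; simp [not_lt]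
    rw [h2, hcardU] at h1
    omega
  have h2m : 2^m = 2*A + D := by omega
  have hSup : S + A ≤ 2^m := by omega
  have hDle : D ≤ (ℓ+1) * m.choose (m/2) := by
    have hK := card_wt_mem_le (m := m) (fun j => 2*j ≤ n ∧ m ≤ 2*j + ℓ)
      (Finset.Icc ((m-ℓ+1)/2) ((m-ℓ+1)/2 + ℓ))
      (by intro j hj hpj; rw [Finset.mem_Icc]; omega)
    have hKcard : (Finset.Icc ((m-ℓ+1)/2) ((m-ℓ+1)/2 + ℓ)).card = ℓ + 1 := by
      rw [Nat.card_Icc]; omega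
    rw [hKcard] at hK
    exact hK
  -- real part
  rw [hmr]
  set M : ℝ := (m.choose (m/2) : ℝ) with hMdef
  have hM : M * Real.sqrt m ≤ (Real.exp 1 / Real.pi) * 2 ^ m := choose_middle_sqrt_le m
  have hsqm : (0:ℝ) < Real.sqrt m := Real.sqrt_pos.2 (by exact_mod_cast hm1)
  have hT : (0:ℝ) < (2:ℝ)^m := by positivity
  have cAS : (A:ℝ) ≤ S := by exact_mod_cast hAS
  have cSup : (S:ℝ) + A ≤ 2^m := by exact_mod_cast hSup
  have c2m : (2:ℝ)^m = 2*A + D := by exact_mod_cast h2m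
  have cD : (0:ℝ) ≤ D := Nat.cast_nonneg _
  have step1 : |(S:ℝ)/2^m - 1/2| ≤ (D:ℝ)/(2*2^m) := by
    have e : (S:ℝ)/2^m - 1/2 = (2*S - 2^m)/(2*2^m) := by field_simp
    rw [e, abs_div, abs_of_pos (by positivity : (0:ℝ) < 2*2^m)]
    apply div_le_div_of_nonneg_right ?_ (by positivity)
    rw [abs_le]
    constructor <;> linarith
  have step2 : (D:ℝ) ≤ ((ℓ:ℝ)+1) * M := by
    rw [hMdef]
    exact_mod_cast hDle
  have hsmm : Real.sqrt ((n:ℝ) - Real.sqrt n) ≤ Real.sqrt m := Real.sqrt_le_sqrt hnsm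
  have hM0 : (0:ℝ) ≤ M := Nat.cast_nonneg _
  have claim1 : (ℓ:ℝ) * M ≤ ε * 2^m := by
    have h1 : (ℓ:ℝ) ≤ ε * (Real.pi / Real.exp 1) * Real.sqrt m :=
      hfloorle.trans (mul_le_mul_of_nonneg_left hsmm (by positivity))
    calc (ℓ:ℝ) * M ≤ (ε * (Real.pi / Real.exp 1) * Real.sqrt m) * M :=
          mul_le_mul_of_nonneg_right h1 hM0
      _ = ε * (Real.pi / Real.exp 1) * (M * Real.sqrt m) := by ring
      _ ≤ ε * (Real.pi / Real.exp 1) * ((Real.exp 1 / Real.pi) * 2 ^ m) :=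
          mul_le_mul_of_nonneg_left hM (by positivity)
      _ = ε * 2^m := by field_simp
  have claim2 : M ≤ (Real.exp 1 / Real.pi) / Real.sqrt m * 2^m := by
    rw [div_mul_eq_mul_div, le_div_iff₀ hsqm]
    linarith [hM]
  have hrhs0 : (0:ℝ) ≤ (Real.exp 1 / Real.pi) / Real.sqrt m := by positivity
  calc |(S:ℝ)/2^m - 1/2| ≤ (D:ℝ)/(2*2^m) := step1
    _ ≤ ((ℓ:ℝ) * M + M)/(2*2^m) := by
        apply div_le_div_of_nonneg_right ?_ (by positivity)
        calc (D:ℝ) ≤ ((ℓ:ℝ)+1) * M := step2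
          _ = (ℓ:ℝ) * M + M := by ring
    _ ≤ (ε * 2^m + (Real.exp 1 / Real.pi) / Real.sqrt m * 2^m)/(2*2^m) := by
        apply div_le_div_of_nonneg_right ?_ (by positivity)
        linarith
    _ = (ε + (Real.exp 1 / Real.pi) / Real.sqrt m)/2 := by field_simp
    _ ≤ ε + (Real.exp 1 / Real.pi) / Real.sqrt m := by linarith

end Main
end
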